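/- Let α, σ be schedulers, let t ∈ (0,1), and let p_data be a probability density on ℝ^d with compact support. Then the marginal density p_t is everywhere positive and differentiable on ℝ^d, and for every x ∈ ℝ^d the score function satisfies ∇ log p_t(x) = (α_t D_t(x) − x)/σ_t². -/

import Mathlib

open MeasureTheory Real Matrix
open scoped BigOperators

noncomputable def gauss1 (y m v : ℝ) : ℝ :=
  (2 * Real.pi * v) ^ (-(1:ℝ)/2) * Real.exp (-(y - m)^2 / (2 * v))

noncomputable def gauss2 (x m : Fin 2 → ℝ) (S : Matrix (Fin 2) (Fin 2) ℝ) : ℝ :=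
  (2 * Real.pi)⁻¹ * S.det ^ (-(1:ℝ)/2) *
    Real.exp (-(1/2) * ((x - m) ⬝ᵥ (S⁻¹ *ᵥ (x - m))))

noncomputable def suffStat (μ : Fin 2 → ℝ) (S : Matrix (Fin 2) (Fin 2) ℝ)
    (x : Fin 2 → ℝ) : ℝ :=
  (μ ⬝ᵥ (S⁻¹ *ᵥ x)) / (μ ⬝ᵥ (S⁻¹ *ᵥ μ))

structure IsScheduler (α σ : ℝ → ℝ) : Prop where
  contDiff_a : ContDiffOn ℝ 1 α (Set.Icc 0 1)
  contDiff_s : ContDiffOn ℝ 1 σ (Set.Icc 0 1)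
  a0 : α 0 = 0
  a1 : α 1 = 1
  s0 : σ 0 = 1
  s1 : σ 1 = 0
  mono_a : StrictMonoOn α (Set.Icc 0 1)
  anti_s : StrictAntiOn σ (Set.Icc 0 1)

def IsProbDensity {d : ℕ} (p : (Fin d → ℝ) → ℝ) : Prop :=
  Measurable p ∧ (∀ z, 0 ≤ p z) ∧ (∫ z, p z) = 1

noncomputable def marginal {d : ℕ} (α σ : ℝ → ℝ) (p : (Fin d → ℝ) → ℝ)
    (t : ℝ) (x : Fin d → ℝ) : ℝ :=
  ∫ z, (∏ j, gauss1 (x j) (α t * z j) ((σ t)^2)) * p z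

noncomputable def post {d : ℕ} (α σ : ℝ → ℝ) (p : (Fin d → ℝ) → ℝ)
    (t : ℝ) (z x : Fin d → ℝ) : ℝ :=
  (∏ j, gauss1 (x j) (α t * z j) ((σ t)^2)) * p z / marginal α σ p t x

noncomputable def denoiser {d : ℕ} (α σ : ℝ → ℝ) (p : (Fin d → ℝ) → ℝ)
    (t : ℝ) (x : Fin d → ℝ) : Fin d → ℝ :=
  ∫ z, post α σ p t z x • z

noncomputable def glassLik {d : ℕ} (μ : Fin 2 → ℝ) (S : Matrix (Fin 2) (Fin 2) ℝ)
    (x1 x2 z : Fin d → ℝ) : ℝ :=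
  ∏ j, gauss2 ![x1 j, x2 j] (z j • μ) S

noncomputable def glassZ {d : ℕ} (μ : Fin 2 → ℝ) (S : Matrix (Fin 2) (Fin 2) ℝ)
    (p : (Fin d → ℝ) → ℝ) (x1 x2 : Fin d → ℝ) : ℝ :=
  ∫ w, glassLik μ S x1 x2 w * p w

noncomputable def glassPost {d : ℕ} (μ : Fin 2 → ℝ) (S : Matrix (Fin 2) (Fin 2) ℝ)
    (p : (Fin d → ℝ) → ℝ) (x1 x2 z : Fin d → ℝ) : ℝ :=
  glassLik μ S x1 x2 z * p z / glassZ μ S p x1 x2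

noncomputable def glassDenoiser {d : ℕ} (μ : Fin 2 → ℝ) (S : Matrix (Fin 2) (Fin 2) ℝ)
    (p : (Fin d → ℝ) → ℝ) (x1 x2 : Fin d → ℝ) : Fin d → ℝ :=
  ∫ z, glassPost μ S p x1 x2 z • z


section auxGauss
open MeasureTheory Real

lemma gauss1_pos {y m v : ℝ} (hv : 0 < v) : 0 < gauss1 y m v := by
  unfold gauss1
  have : (0:ℝ) < 2 * Real.pi * v := by positivity
  positivity

lemma gauss1_le {y m v : ℝ} (hv : 0 < v) :
    gauss1 y m v ≤ (2 * Real.pi * v) ^ (-(1:ℝ)/2) := by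
  unfold gauss1
  have h1 : Real.exp (-(y - m)^2 / (2 * v)) ≤ 1 := by
    rw [Real.exp_le_one_iff]
    apply div_nonpos_of_nonpos_of_nonneg
    · nlinarith [sq_nonneg (y - m)]
    · positivity
  have hc : (0:ℝ) < (2 * Real.pi * v) ^ (-(1:ℝ)/2) := by
    apply Real.rpow_pos_of_pos; positivity
  nlinarith

lemma hasDerivAt_gauss1 (m v : ℝ) (hv : 0 < v) (y : ℝ) :
    HasDerivAt (fun y => gauss1 y m v) (gauss1 y m v * ((m - y) / v)) y := by
  have h1 : HasDerivAt (fun y : ℝ => -(y - m)^2 / (2*v))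
      (-(2 * (y - m)^1 * 1) / (2*v)) y :=
    ((((hasDerivAt_id y).sub_const m).pow 2).neg).div_const (2*v)
  have h2 := (h1.exp).const_mul ((2 * Real.pi * v) ^ (-(1:ℝ)/2))
  refine h2.congr_deriv ?_
  unfold gauss1
  field_simp
  ring

lemma continuous_gauss1 {X : Type*} [TopologicalSpace X] {f g : X → ℝ} (hf : Continuous f)
    (hg : Continuous g) (v : ℝ) : Continuous fun x => gauss1 (f x) (g x) v := by
  unfold gauss1
  fun_prop

noncomputable def gKer {d : ℕ} (a v : ℝ) (x z : Fin d → ℝ) : ℝ :=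
  ∏ j, gauss1 (x j) (a * z j) v

noncomputable def gKerD {d : ℕ} (a v : ℝ) (x z : Fin d → ℝ) : (Fin d → ℝ) →L[ℝ] ℝ :=
  ∑ j, (∏ i ∈ Finset.univ.erase j, gauss1 (x i) (a * z i) v) •
    ((gauss1 (x j) (a * z j) v * ((a * z j - x j) / v)) •
      (ContinuousLinearMap.proj j : (Fin d → ℝ) →L[ℝ] ℝ))

lemma gKer_pos {d : ℕ} {a v : ℝ} (hv : 0 < v) (x z : Fin d → ℝ) : 0 < gKer a v x z :=
  Finset.prod_pos fun _ _ => gauss1_pos hv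

lemma gKer_le {d : ℕ} {a v : ℝ} (hv : 0 < v) (x z : Fin d → ℝ) :
    gKer a v x z ≤ ((2 * Real.pi * v) ^ (-(1:ℝ)/2)) ^ d := by
  calc gKer a v x z ≤ ∏ _j : Fin d, (2 * Real.pi * v) ^ (-(1:ℝ)/2) :=
        Finset.prod_le_prod (fun j _ => (gauss1_pos hv).le) (fun j _ => gauss1_le hv)
    _ = ((2 * Real.pi * v) ^ (-(1:ℝ)/2)) ^ d := by simp

lemma gKer_cont {d : ℕ} (a v : ℝ) :
    Continuous fun q : (Fin d → ℝ) × (Fin d → ℝ) => gKer a v q.1 q.2 := by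
  apply continuous_finset_prod
  intro j _
  exact continuous_gauss1 ((continuous_apply j).comp continuous_fst)
    (continuous_const.mul ((continuous_apply j).comp continuous_snd)) v

lemma gKerD_cont {d : ℕ} (a v : ℝ) :
    Continuous fun q : (Fin d → ℝ) × (Fin d → ℝ) => gKerD a v q.1 q.2 := by
  apply continuous_finset_sum
  intro j _
  apply Continuous.fun_smul
  · exact continuous_finset_prod _ fun i _ =>
      continuous_gauss1 ((continuous_apply i).comp continuous_fst)
        (continuous_const.mul ((continuous_apply i).comp continuous_snd)) v
  · apply Continuous.fun_smul _ continuous_const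
    exact (continuous_gauss1 ((continuous_apply j).comp continuous_fst)
      (continuous_const.mul ((continuous_apply j).comp continuous_snd)) v).mul
      (by fun_prop)

lemma gKer_hasFDerivAt {d : ℕ} {a v : ℝ} (hv : 0 < v) (z x : Fin d → ℝ) :
    HasFDerivAt (fun x => gKer a v x z) (gKerD a v x z) x := by
  apply HasFDerivAt.finset_prod (u := Finset.univ)
    (g := fun j x => gauss1 (x j) (a * z j) v)
    (g' := fun j => (gauss1 (x j) (a * z j) v * ((a * z j - x j) / v)) •
      (ContinuousLinearMap.proj j : (Fin d → ℝ) →L[ℝ] ℝ))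
  intro j _
  have h := (hasDerivAt_gauss1 (a * z j) v hv (x j)).comp_hasFDerivAt x (hasFDerivAt_apply (𝕜 := ℝ) j x); exact h

lemma gKerD_apply {d : ℕ} (a v : ℝ) (x z : Fin d → ℝ) (j : Fin d) :
    gKerD a v x z (Pi.single j 1) = gKer a v x z * ((a * z j - x j) / v) := by
  unfold gKerD gKer
  rw [ContinuousLinearMap.sum_apply, Finset.sum_eq_single j]
  · simp only [ContinuousLinearMap.smul_apply, ContinuousLinearMap.proj_apply,
      Pi.single_eq_same, smul_eq_mul, mul_one]
    rw [← Finset.prod_erase_mul Finset.univ _ (Finset.mem_univ j)]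
    ring
  · intro i _ hij
    simp [Pi.single_eq_of_ne hij]
  · simp

lemma gKer_cont1 {d : ℕ} (a v : ℝ) (x : Fin d → ℝ) : Continuous fun z => gKer a v x z := by
  apply continuous_finset_prod
  intro j _
  exact continuous_gauss1 continuous_const (continuous_const.mul (continuous_apply j)) v

lemma gKerD_cont1 {d : ℕ} (a v : ℝ) (x : Fin d → ℝ) :
    Continuous fun z => gKerD a v x z := by
  apply continuous_finset_sum
  intro j _
  apply Continuous.fun_smul
  · exact continuous_finset_prod _ fun i _ =>
      continuous_gauss1 continuous_const (continuous_const.mul (continuous_apply i)) v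
  · apply Continuous.fun_smul _ continuous_const
    exact (continuous_gauss1 continuous_const (continuous_const.mul (continuous_apply j)) v).mul
      (by fun_prop)

end auxGauss

theorem stmt9 {d : ℕ} (α σ : ℝ → ℝ) (hsch : IsScheduler α σ)
    (t : ℝ) (ht : t ∈ Set.Ioo (0:ℝ) 1)
    (p : (Fin d → ℝ) → ℝ) (hp : IsProbDensity p) (hps : HasCompactSupport p) :
    (∀ x : Fin d → ℝ, 0 < marginal α σ p t x) ∧
    (∀ x : Fin d → ℝ, DifferentiableAt ℝ (marginal α σ p t) x) ∧
    (∀ (x : Fin d → ℝ) (j : Fin d),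
      fderiv ℝ (fun y => Real.log (marginal α σ p t y)) x (Pi.single j 1)
        = (α t * denoiser α σ p t x j - x j) / (σ t)^2) := by
  
  obtain ⟨ht0, ht1⟩ := ht
  obtain ⟨hpm, hp0, hp1⟩ := hp
  have hσ : 0 < σ t := by
    have h := hsch.anti_s (Set.mem_Icc.mpr ⟨le_of_lt ht0, le_of_lt ht1⟩)
      (Set.mem_Icc.mpr ⟨zero_le_one, le_refl 1⟩) ht1
    rw [hsch.s1] at h; exact h
  have hv : 0 < (σ t)^2 := pow_pos hσ 2
  have hc : 0 < ((2 * Real.pi * (σ t)^2) ^ (-(1:ℝ)/2)) ^ d := by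
    apply pow_pos (Real.rpow_pos_of_pos (by positivity) _)
  have hmarg : ∀ x, marginal α σ p t x = ∫ z, gKer (α t) ((σ t)^2) x z * p z := fun x => rfl
  have hIp : Integrable p := integrable_of_integral_eq_one hp1
  have hKxcont : ∀ x : Fin d → ℝ, Continuous fun z => gKer (α t) ((σ t)^2) x z := fun x =>
    gKer_cont1 (α t) ((σ t)^2) x
  have hf1 : ∀ x, Integrable fun z => gKer (α t) ((σ t)^2) x z * p z := by
    intro x
    apply hIp.bdd_mul (hKxcont x).aestronglyMeasurable
    exact Filter.Eventually.of_forall (fun z => by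
      rw [Real.norm_eq_abs, abs_of_pos (gKer_pos hv x z)]; exact gKer_le hv x z)
  have hpos : ∀ x, 0 < marginal α σ p t x := by
    intro x
    have hnn : 0 ≤ fun z => gKer (α t) ((σ t)^2) x z * p z :=
      fun z => mul_nonneg (gKer_pos hv x z).le (hp0 z)
    rw [hmarg x, integral_pos_iff_support_of_nonneg hnn (hf1 x)]
    have hsupp : (Function.support fun z => gKer (α t) ((σ t)^2) x z * p z)
        = Function.support p := by
      ext z; simp [Function.mem_support, (gKer_pos hv x z).ne']
    rw [hsupp]
    by_contra h
    push_neg at h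
    have h0 : volume (Function.support p) = 0 := le_antisymm h zero_le
    have hae : ∀ᵐ z, p z = 0 := by
      rw [MeasureTheory.ae_iff]
      exact h0
    have h2 := MeasureTheory.integral_eq_zero_of_ae hae
    rw [hp1] at h2; norm_num at h2
  obtain ⟨R, hR⟩ := (IsCompact.isBounded hps).exists_norm_le
  have hRp : ∀ z : Fin d → ℝ, p z ≠ 0 → ‖z‖ ≤ R := fun z hz => hR z (subset_tsupport p hz)
  have hbound : ∀ x : Fin d → ℝ, ∃ M, 0 ≤ M ∧
      ∀ x' ∈ Metric.ball x 1, ∀ z, ‖p z • gKerD (α t) ((σ t)^2) x' z‖ ≤ M * ‖p z‖ := by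
    intro x
    obtain ⟨M, hM⟩ := IsCompact.exists_bound_of_continuousOn
      ((isCompact_closedBall x 1).prod (hps : IsCompact (tsupport p)))
      ((gKerD_cont (α t) ((σ t)^2)).continuousOn)
    refine ⟨max M 0, le_max_right _ _, ?_⟩
    intro x' hx' z
    by_cases hz : p z = 0
    · simp [hz]
    · have hzs : z ∈ tsupport p := subset_tsupport p hz
      have hxs : x' ∈ Metric.closedBall x 1 := Metric.ball_subset_closedBall hx'
      have h1 := hM (x', z) (Set.mk_mem_prod hxs hzs)
      rw [norm_smul (p z) (gKerD (α t) ((σ t)^2) x' z)]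
      calc ‖p z‖ * ‖gKerD (α t) ((σ t)^2) x' z‖ ≤ ‖p z‖ * max M 0 :=
            mul_le_mul_of_nonneg_left (le_trans h1 (le_max_left _ _)) (norm_nonneg _)
        _ = max M 0 * ‖p z‖ := mul_comm _ _
  have hf2 : ∀ x, Integrable fun z => p z • gKerD (α t) ((σ t)^2) x z := by
    intro x
    obtain ⟨M, hM0, hM⟩ := hbound x
    apply Integrable.mono' (hIp.norm.const_mul M)
    · exact hpm.aestronglyMeasurable.smul
        (gKerD_cont1 (α t) ((σ t)^2) x).aestronglyMeasurable
    · exact Filter.Eventually.of_forall fun z => hM x (Metric.mem_ball_self one_pos) z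
  have hfd : ∀ x, HasFDerivAt (marginal α σ p t)
      (∫ z, p z • gKerD (α t) ((σ t)^2) x z) x := by
    intro x
    obtain ⟨M, hM0, hM⟩ := hbound x
    have h := hasFDerivAt_integral_of_dominated_of_fderiv_le (μ := volume)
      (F := fun x z => gKer (α t) ((σ t)^2) x z * p z)
      (F' := fun x z => p z • gKerD (α t) ((σ t)^2) x z) (x₀ := x)
      (bound := fun z => M * ‖p z‖) (Metric.ball_mem_nhds x one_pos)
      (Filter.Eventually.of_forall fun x' =>
        ((hKxcont x').aestronglyMeasurable.mul hpm.aestronglyMeasurable))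
      (hf1 x)
      (hpm.aestronglyMeasurable.smul
        (gKerD_cont1 (α t) ((σ t)^2) x).aestronglyMeasurable)
      (Filter.Eventually.of_forall fun z x' hx' => hM x' hx' z)
      (hIp.norm.const_mul M)
      (Filter.Eventually.of_forall fun z x' hx' =>
        (gKer_hasFDerivAt hv z x').mul_const (p z))
    exact h
  refine ⟨hpos, fun x => (hfd x).differentiableAt, ?_⟩
  intro x j
  
  have hMx := hpos x
  have hlog := (hfd x).log hMx.ne'
  rw [hlog.fderiv]
  rw [ContinuousLinearMap.smul_apply, ContinuousLinearMap.integral_apply (hf2 x)]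
  have hsingle : ∀ z : Fin d → ℝ, (p z • gKerD (α t) ((σ t)^2) x z) (Pi.single j 1)
      = (α t / (σ t)^2) * (gKer (α t) ((σ t)^2) x z * p z * z j)
        - (x j / (σ t)^2) * (gKer (α t) ((σ t)^2) x z * p z) := by
    intro z
    rw [ContinuousLinearMap.smul_apply, gKerD_apply]
    simp only [smul_eq_mul]
    ring
  simp only [hsingle]
  have hf3 : Integrable fun z => gKer (α t) ((σ t)^2) x z * p z * z j := by
    apply Integrable.mono'
      (hIp.norm.const_mul (((2 * Real.pi * (σ t)^2) ^ (-(1:ℝ)/2)) ^ d * max R 0))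
    · exact ((hKxcont x).aestronglyMeasurable.mul hpm.aestronglyMeasurable).mul
        (continuous_apply j).aestronglyMeasurable
    · refine Filter.Eventually.of_forall fun z => ?_
      by_cases hz : p z = 0
      · simp [hz]
      · have h1 : |z j| ≤ max R 0 :=
          le_trans (le_trans (norm_le_pi_norm z j) (hRp z hz)) (le_max_left _ _)
        rw [Real.norm_eq_abs, abs_mul, abs_mul, abs_of_pos (gKer_pos hv x z), Real.norm_eq_abs]
        have h2 := gKer_le (a := α t) hv x z
        have h3 := (gKer_pos (a := α t) hv x z).le
        have h4 := abs_nonneg (p z)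
        have h5 := abs_nonneg (z j)
        have h6 : (0:ℝ) ≤ ((2 * Real.pi * (σ t)^2) ^ (-(1:ℝ)/2)) ^ d := hc.le
        have h7 : gKer (α t) ((σ t)^2) x z * |z j|
            ≤ ((2 * Real.pi * (σ t)^2) ^ (-(1:ℝ)/2)) ^ d * max R 0 :=
          mul_le_mul h2 h1 h5 h6
        nlinarith [mul_le_mul_of_nonneg_right h7 h4]
  rw [integral_sub ((hf3).const_mul _) ((hf1 x).const_mul _),
    integral_const_mul, integral_const_mul]
  have hintpost : Integrable fun z => post α σ p t z x • z := by
    apply Integrable.mono' (hIp.norm.const_mul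
      ((((2 * Real.pi * (σ t)^2) ^ (-(1:ℝ)/2)) ^ d * max R 0) / marginal α σ p t x))
    · apply AEStronglyMeasurable.fun_smul _ aestronglyMeasurable_id
      have heq : (fun z => post α σ p t z x)
          = fun z => gKer (α t) ((σ t)^2) x z * p z * (marginal α σ p t x)⁻¹ := by
        funext z; exact div_eq_mul_inv _ _
      rw [heq]
      exact ((hKxcont x).aestronglyMeasurable.mul hpm.aestronglyMeasurable).mul
        aestronglyMeasurable_const
    · refine Filter.Eventually.of_forall fun z => ?_
      by_cases hz : p z = 0
      · have h0 : post α σ p t z x = 0 := by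
          rw [show post α σ p t z x
            = gKer (α t) ((σ t)^2) x z * p z / marginal α σ p t x from rfl, hz]
          simp
        rw [h0, zero_smul, norm_zero]
        positivity
      · rw [norm_smul]
        have h1 : ‖z‖ ≤ max R 0 := le_trans (hRp z hz) (le_max_left _ _)
        have h2 : ‖post α σ p t z x‖
            ≤ (((2 * Real.pi * (σ t)^2) ^ (-(1:ℝ)/2)) ^ d) * ‖p z‖ / marginal α σ p t x := by
          rw [show post α σ p t z x
            = gKer (α t) ((σ t)^2) x z * p z / marginal α σ p t x from rfl]
          rw [Real.norm_eq_abs, abs_div, abs_of_pos hMx, abs_mul,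
            abs_of_pos (gKer_pos hv x z), Real.norm_eq_abs]
          gcongr
          exact gKer_le hv x z
        calc ‖post α σ p t z x‖ * ‖z‖
            ≤ ((((2 * Real.pi * (σ t)^2) ^ (-(1:ℝ)/2)) ^ d) * ‖p z‖ / marginal α σ p t x)
              * max R 0 := by
              apply mul_le_mul h2 h1 (norm_nonneg _) (by positivity)
          _ = ((((2 * Real.pi * (σ t)^2) ^ (-(1:ℝ)/2)) ^ d * max R 0) / marginal α σ p t x)
              * ‖p z‖ := by ring
  have hden : denoiser α σ p t x j
      = (∫ z, gKer (α t) ((σ t)^2) x z * p z * z j) / marginal α σ p t x := by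
    have h1 := (ContinuousLinearMap.proj j : (Fin d → ℝ) →L[ℝ] ℝ).integral_comp_comm hintpost
    simp only [ContinuousLinearMap.proj_apply] at h1
    have h2 : ∀ z : Fin d → ℝ, (post α σ p t z x • z) j
        = (gKer (α t) ((σ t)^2) x z * p z * z j) / marginal α σ p t x := by
      intro z
      rw [Pi.smul_apply, smul_eq_mul,
        show post α σ p t z x
          = gKer (α t) ((σ t)^2) x z * p z / marginal α σ p t x from rfl]
      ring
    rw [show denoiser α σ p t x = ∫ z, post α σ p t z x • z from rfl, ← h1]
    simp only [h2]
    rw [integral_div]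
  rw [hden]
  rw [show (∫ z, gKer (α t) ((σ t)^2) x z * p z) = marginal α σ p t x from (hmarg x).symm]
  rw [smul_eq_mul]
  field_simp
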